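/- Let n ≥ 2. The characteristic polynomial of the matrix A satisfies (X − q^{n−3}) · charpoly(A) = X^n − q^{n(n−3)} in K[X]; equivalently, charpoly(A) = Σ_{i=0}^{n−1} q^{(n−3)i} X^{n−1−i}. In particular, A has n−1 pairwise distinct eigenvalues, namely ζ·q^{n−3} for ζ ranging over the n-th roots of unity different from 1. -/

import Mathlib

open scoped BigOperators

set_option maxHeartbeats 1000000
set_option synthInstance.maxHeartbeats 400000

noncomputable section

/-- The ground field `K = ℂ(q)`. -/
abbrev K : Type := RatFunc ℂ

/-- The variable `q` of `K = ℂ(q)`. -/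
def q : K := RatFunc.X

/-- `T n` models the `n`-th tensor power of the vector representation of
`U_q(gl(1|1))`, as functions on binary strings of length `n`. -/
abbrev T (n : ℕ) : Type := (Fin n → Fin 2) → K

/-- The standard basis vector `v_α` of `T n`. -/
def v (n : ℕ) (α : Fin n → Fin 2) : T n := fun β => if β = α then 1 else 0

/-- `v₀^{⊗ n}`, the basis vector of the all-zeroes string. -/
def v0 (n : ℕ) : T n := v n (fun _ => 0)

/-- `w n i` is the basis vector whose string has a single `1` in (1-indexed) position `i`. -/
def w (n i : ℕ) : T n := v n (fun j => if (j : ℕ) + 1 = i then 1 else 0)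

/-- `e i = -w_i + q⁻¹ w_{i+1}`. -/
def e (n i : ℕ) : T n := -(w n i) + q⁻¹ • w n (i + 1)

/-- The `R`-matrix on a pair of strands: entry `Rmat out inp`. -/
def Rmat : Fin 2 × Fin 2 → Fin 2 × Fin 2 → K := fun out inp =>
  if inp = (0, 0) then (if out = (0, 0) then q else 0)
  else if inp = (1, 0) then (if out = (0, 1) then 1 else 0)
  else if inp = (0, 1) then
    (if out = (1, 0) then 1 else if out = (0, 1) then q - q⁻¹ else 0)
  else (if out = (1, 1) then -q⁻¹ else 0)

/-- The `R`-matrix acting at positions `i`, `j` (0-indexed) of `T n`. -/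
def PhiAux (n : ℕ) (i j : Fin n) : T n →ₗ[K] T n where
  toFun f := fun β => ∑ p : Fin 2 × Fin 2,
    Rmat (β i, β j) p * f (Function.update (Function.update β i p.1) j p.2)
  map_add' f g := by
    funext β
    try dsimp only
    simp only [Pi.add_apply]
    rw [← Finset.sum_add_distrib]
    exact Finset.sum_congr rfl fun p _ => by simp [mul_add]
  map_smul' c f := by
    funext β
    try dsimp only
    simp only [Pi.smul_apply, smul_eq_mul, RingHom.id_apply]
    rw [Finset.mul_sum]
    exact Finset.sum_congr rfl fun p _ => by ring

/-- `Phi n t` is the map induced by the braid generator `σ_t` (with `1 ≤ t ≤ n-1`),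
acting through the `R`-matrix at (1-indexed) positions `(t, t+1)`. -/
def Phi (n t : ℕ) : T n →ₗ[K] T n :=
  if h : 0 < t ∧ t < n then PhiAux n ⟨t - 1, by omega⟩ ⟨t, h.2⟩ else 0

/-- The action of `E` on `T n`. -/
def En (n : ℕ) : T n →ₗ[K] T n where
  toFun f := fun β => ∑ i : Fin n,
    if β i = 0 then
      ((-1 : K) ^ (Finset.univ.filter (fun j : Fin n => j < i ∧ β j = 1)).card
        * q⁻¹ ^ (n - 1 - (i : ℕ))) * f (Function.update β i 1)
    else 0
  map_add' f g := by
    funext β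
    try dsimp only
    simp only [Pi.add_apply]
    rw [← Finset.sum_add_distrib]
    refine Finset.sum_congr rfl fun i _ => ?_
    by_cases h : β i = 0 <;> simp [h, mul_add]
  map_smul' c f := by
    funext β
    try dsimp only
    simp only [Pi.smul_apply, smul_eq_mul, RingHom.id_apply]
    rw [Finset.mul_sum]
    refine Finset.sum_congr rfl fun i _ => ?_
    by_cases h : β i = 0 <;> simp [h] <;> ring

/-- The action of `F` on `T n`. -/
def Fn (n : ℕ) : T n →ₗ[K] T n where
  toFun f := fun β => ∑ i : Fin n,
    if β i = 1 then
      ((-1 : K) ^ (Finset.univ.filter (fun j : Fin n => j < i ∧ β j = 1)).card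
        * q ^ (i : ℕ)) * f (Function.update β i 0)
    else 0
  map_add' f g := by
    funext β
    try dsimp only
    simp only [Pi.add_apply]
    rw [← Finset.sum_add_distrib]
    refine Finset.sum_congr rfl fun i _ => ?_
    by_cases h : β i = 1 <;> simp [h, mul_add]
  map_smul' c f := by
    funext β
    try dsimp only
    simp only [Pi.smul_apply, smul_eq_mul, RingHom.id_apply]
    rw [Finset.mul_sum]
    refine Finset.sum_congr rfl fun i _ => ?_
    by_cases h : β i = 1 <;> simp [h] <;> ring

/-- The number of `1`s in a binary string. -/
def wt {n : ℕ} (α : Fin n → Fin 2) : ℕ := (Finset.univ.filter (fun i => α i = 1)).card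

/-- `Tk n k` is the span of the basis vectors with exactly `k` entries equal to `1`. -/
def Tk (n k : ℕ) : Submodule K (T n) :=
  Submodule.span K {f : T n | ∃ α, wt α = k ∧ f = v n α}

/-- `Hk n k` is the space of highest weight vectors of weight `(n-k)ε₁ + kε₂`. -/
def Hk (n k : ℕ) : Submodule K (T n) := LinearMap.ker (En n) ⊓ Tk n k

/-- The bilinear product `m` on `T n`. -/
def mul2 (n : ℕ) (f g : T n) : T n := fun γ =>
  ∑ α : Fin n → Fin 2,
    if (∀ i, α i = 1 → γ i = 1) then
      ((-1 : K) ^ (∑ p ∈ Finset.univ.filter (fun p : Fin n × Fin n => p.1 < p.2),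
          (((fun i => if α i = 1 then 0 else γ i) p.1 : Fin 2) : ℕ) * ((α p.2 : Fin 2) : ℕ)))
        * f α * g (fun i => if α i = 1 then 0 else γ i)
    else 0

/-- The left-iterated product `Ψ(u_1, …, u_k) = m(…m(m(u_1,u_2),u_3)…,u_k)`. -/
def Psi (n : ℕ) : (k : ℕ) → (Fin k → T n) → T n
  | 0, _ => v0 n
  | 1, u => u 0
  | (k + 2), u => mul2 n (Psi n (k + 1) (fun i => u i.castSucc)) (u (Fin.last (k + 1)))

/-- Concatenation (tensor product) `T a ⊗ T b → T (a + b)`. -/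
def conc {a b : ℕ} (f : T a) (g : T b) : T (a + b) := fun γ =>
  f (fun i => γ (Fin.castAdd b i)) * g (fun i => γ (Fin.natAdd a i))

/-- Identification `T a ≃ T b` for `a = b`. -/
def castT {a b : ℕ} (h : a = b) (f : T a) : T b := fun γ => f (fun i => γ (Fin.cast h i))

/-- The block vector `Θ_b = Σ_{r=0}^{b-1} (-1)^r q^{-(b-1-r)} v_{β(r)}`. -/
def Theta (b : ℕ) : T b :=
  ∑ r : Fin b, ((-1 : K) ^ (r : ℕ) * q⁻¹ ^ (b - 1 - (r : ℕ))) •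
    v b (fun i => if i = r then 0 else 1)

/-- The map induced by the braid `λ = σ_{n-1} ⋯ σ_1`. -/
def Lam (n : ℕ) : T n →ₗ[K] T n :=
  ((List.range (n - 1)).map (fun t => Phi n (t + 1))).foldl (fun acc g => g ∘ₗ acc) LinearMap.id

/-- The Vandermonde-type matrix `B(n)`. -/
def B (n : ℕ) : Matrix (Fin n) (Fin n) K :=
  fun i j => q ^ ((i : ℤ) * (n : ℤ) * ((n : ℤ) - 1 - 2 * (j : ℤ)))

/-- `C(n) = B(n)⁻¹`. -/
def Cmat (n : ℕ) : Matrix (Fin n) (Fin n) K := (B n)⁻¹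

/-- A combinatorial string `(a_1, b_1, a_2, b_2, …, b_l, a_{l+1})`. -/
structure GString where
  l : ℕ
  a : Fin (l + 1) → ℕ
  b : Fin l → ℕ

/-- Membership of a string in `S_k` (for strands number `n`). -/
def memSk (n k : ℕ) (s : GString) : Prop :=
  (∀ i, 2 ≤ s.b i) ∧ (∑ i, (s.b i - 1)) = k ∧ ((∑ i, s.a i) + ∑ i, s.b i) = n

/-- The length of the string, computed blockwise. -/
def lenOf : (l : ℕ) → (Fin (l + 1) → ℕ) → (Fin l → ℕ) → ℕ
  | 0, a, _ => a 0
  | (l + 1), a, b => (a 0 + b 0) + lenOf l (fun i => a i.succ) (fun i => b i.succ)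

/-- The concatenation `v₀^{⊗a_1} ⊗ Θ_{b_1} ⊗ ⋯ ⊗ Θ_{b_l} ⊗ v₀^{⊗a_{l+1}}`. -/
def rawphi : (l : ℕ) → (a : Fin (l + 1) → ℕ) → (b : Fin l → ℕ) → T (lenOf l a b)
  | 0, a, _ => v0 (a 0)
  | (l + 1), a, b =>
      conc (conc (v0 (a 0)) (Theta (b 0)))
        (rawphi l (fun i => a i.succ) (fun i => b i.succ))

/-- `φ(s) ∈ T n`, the vector associated to a string `s`. -/
def phi (n : ℕ) (s : GString) : T n :=
  if h : lenOf s.l s.a s.b = n then castT h (rawphi s.l s.a s.b) else 0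


/-- The matrix of the action of `λ` on `H_1` in the basis `(e_j)`. -/
def Amat (n : ℕ) : Matrix (Fin (n - 1)) (Fin (n - 1)) K :=
  fun j i => if (i : ℕ) = 0 then -q ^ ((n : ℤ) - 3 - ((j : ℕ) : ℤ))
    else if (j : ℕ) + 1 = (i : ℕ) then q ^ (n - 2) else 0

/-
Apart from its first column, `X - A` is upper bidiagonal, with `X` on the diagonal and
`-q^{n-2}` above it. Expanding along the first row peels off one index at a time, so the
determinant of such a matrix with first column `c` is `∑ c_j (q^{n-2})^j X^{n-2-j}`. For `A`
this makes the coefficients powers of `a = q^{n-3}`: the characteristic polynomial is the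
geometric sum `∑ a^i X^{n-1-i}`, so `(X - a) charpoly(A) = X^n - a^n`, whose roots other than
`a` are the `ζ a` with `ζ^n = 1`, `ζ ≠ 1`.
-/

open Polynomial

section FirstColumnMatrices

variable {R : Type*} [CommRing R]

def firstColSuperdiag {m : ℕ} (a : Fin m → R) (t : R) : Matrix (Fin m) (Fin m) R :=
  Matrix.of fun j i => if (i : ℕ) = 0 then a j else if (j : ℕ) + 1 = i then t else 0

def firstColBidiag {m : ℕ} (c : Fin m → R) (x s : R) : Matrix (Fin m) (Fin m) R :=
  Matrix.of fun j i =>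
    if (i : ℕ) = 0 then c j else if (j : ℕ) + 1 = i then -s else if j = i then x else 0

variable (x s : R)

lemma det_firstColBidiag_submatrix_succ_succ {m : ℕ} (c : Fin (m + 2) → R) :
    ((firstColBidiag c x s).submatrix Fin.succ Fin.succ).det = x ^ (m + 1) := by
  have htri : ((firstColBidiag c x s).submatrix Fin.succ Fin.succ).IsUpperTriangular := by
    intro j i hij
    have : (i : ℕ) < j := hij
    simp only [Matrix.submatrix_apply, firstColBidiag, Matrix.of_apply, Fin.val_succ,
      Fin.succ_inj]
    rw [if_neg (by omega), if_neg (by omega), if_neg (by omega)]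
  rw [Matrix.det_of_isUpperTriangular htri]
  simp [firstColBidiag]

lemma firstColBidiag_submatrix_succ_succAbove_one {m : ℕ} (c : Fin (m + 2) → R) :
    (firstColBidiag c x s).submatrix Fin.succ (Fin.succAbove 1) =
      firstColBidiag (fun j => c j.succ) x s := by
  ext j i
  rcases Fin.eq_zero_or_eq_succ i with rfl | ⟨i, rfl⟩
  · simp [firstColBidiag]
  · have : (1 : Fin (m + 2)).succAbove i.succ = i.succ.succ :=
      Fin.succAbove_of_le_castSucc _ _ (by simp [Fin.le_iff_val_le_val])
    simp only [Matrix.submatrix_apply, firstColBidiag, Matrix.of_apply, this, Fin.val_succ,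
      Fin.succ_inj]
    grind

lemma det_firstColBidiag : ∀ {m : ℕ} (c : Fin (m + 1) → R),
    (firstColBidiag c x s).det = ∑ j : Fin (m + 1), c j * s ^ (j : ℕ) * x ^ (m - j)
  | 0, c => by simp [firstColBidiag]
  | m + 1, c => by
    have hrow : ∀ j : Fin m, firstColBidiag c x s 0 j.succ.succ = 0 := fun j => by
      simp [firstColBidiag, (Fin.succ_ne_zero _).symm]
    have h00 : firstColBidiag c x s 0 0 = c 0 := by simp [firstColBidiag]
    have h01 : firstColBidiag c x s 0 1 = -s := by simp [firstColBidiag]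
    rw [Matrix.det_succ_row_zero, Fin.sum_univ_succ, Fin.sum_univ_succ]
    simp only [hrow, mul_zero, zero_mul, Finset.sum_const_zero, add_zero]
    rw [Fin.succAbove_zero, det_firstColBidiag_submatrix_succ_succ, Fin.succ_zero_eq_one',
      firstColBidiag_submatrix_succ_succAbove_one, det_firstColBidiag,
      Fin.sum_univ_succ (n := m + 1), Finset.mul_sum, h00, h01]
    congr 1
    · simp
    · refine Finset.sum_congr rfl fun j _ => ?_
      rw [Fin.val_one, Fin.val_succ, Nat.add_sub_add_right]
      ring

lemma charmatrix_firstColSuperdiag {m : ℕ} (a : Fin m → R) (t : R) :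
    (firstColSuperdiag a t).charmatrix =
      firstColBidiag (fun j => (if (j : ℕ) = 0 then X else 0) - C (a j)) X (C t) := by
  ext j i
  by_cases hji : j = i
  · subst hji
    by_cases hj : (j : ℕ) = 0 <;> simp [firstColSuperdiag, firstColBidiag, hj]
  · rw [Matrix.charmatrix_apply_ne _ _ _ hji]
    have hj : (i : ℕ) = 0 → (j : ℕ) ≠ 0 := fun hi hj => hji (Fin.ext (hj.trans hi.symm))
    by_cases hi : (i : ℕ) = 0 <;> by_cases hsuc : (j : ℕ) + 1 = i <;>
      simp [firstColSuperdiag, firstColBidiag, hi, hsuc, hji, hj]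

lemma charpoly_firstColSuperdiag {m : ℕ} (a : Fin (m + 1) → R) (t : R) :
    (firstColSuperdiag a t).charpoly =
      X ^ (m + 1) - ∑ j, C (a j * t ^ (j : ℕ)) * X ^ (m - j) := by
  have hterm : ∀ j : Fin (m + 1),
      ((if (j : ℕ) = 0 then X else 0) - C (a j)) * C t ^ (j : ℕ) * X ^ (m - j) =
        (if j = 0 then X ^ (m + 1) else 0) - C (a j * t ^ (j : ℕ)) * X ^ (m - j) := by
    intro j
    rcases Fin.eq_zero_or_eq_succ j with rfl | ⟨j, rfl⟩
    · simp only [Fin.val_zero, if_true, pow_zero, mul_one, Nat.sub_zero]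
      ring
    · simp only [Fin.val_succ, Nat.succ_ne_zero, Fin.succ_ne_zero, if_false, C_mul, C_pow]
      ring
  rw [Matrix.charpoly, charmatrix_firstColSuperdiag, det_firstColBidiag,
    Finset.sum_congr rfl fun j _ => hterm j, Finset.sum_sub_distrib, Finset.sum_ite_eq']
  simp

end FirstColumnMatrices

section Geometric

variable {R : Type*} [CommRing R]

lemma X_sub_C_mul_sum_C_pow_mul_X_pow (a : R) (n : ℕ) :
    (X - C a) * ∑ i ∈ Finset.range n, C (a ^ i) * X ^ (n - 1 - i) = X ^ n - C (a ^ n) := by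
  simp only [C_pow]
  rw [← geom_sum₂_comm, (Commute.all _ _).mul_geom_sum₂]

lemma isRoot_of_X_sub_C_mul_eq [IsDomain R] {p : R[X]} {a b : R} {n : ℕ}
    (hp : (X - C a) * p = X ^ n - C (a ^ n)) (hb : b ^ n = a ^ n) (hba : b ≠ a) :
    p.IsRoot b := by
  have h := congrArg (eval b) hp
  simp only [eval_mul, eval_sub, eval_X, eval_C, eval_pow, hb, sub_self] at h
  exact (mul_eq_zero.mp h).resolve_left (sub_ne_zero.mpr hba)

end Geometric

lemma q_ne_zero : q ≠ 0 := RatFunc.X_ne_zero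

lemma Amat_eq_firstColSuperdiag (m : ℕ) :
    Amat (m + 2) =
      firstColSuperdiag (fun j : Fin (m + 1) => -q ^ ((m : ℤ) - 1 - (j : ℕ))) (q ^ m) := by
  ext j i
  simp only [Amat, firstColSuperdiag, Matrix.of_apply]
  push_cast
  ring_nf

lemma charpoly_Amat {n : ℕ} (hn : 2 ≤ n) :
    (Amat n).charpoly =
      ∑ i ∈ Finset.range n, C (q ^ (((n : ℤ) - 3) * (i : ℤ))) * X ^ (n - 1 - i) := by
  obtain ⟨m, rfl⟩ : ∃ m, n = m + 2 := ⟨n - 2, by omega⟩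
  have hpow : ∀ j : ℕ,
      q ^ ((m : ℤ) - 1 - j) * (q ^ m) ^ j = q ^ (((m + 2 : ℕ) - 3 : ℤ) * (j + 1 : ℕ)) := by
    intro j
    rw [← zpow_natCast, ← zpow_natCast, ← zpow_mul, ← zpow_add₀ q_ne_zero]
    push_cast
    ring_nf
  rw [Amat_eq_firstColSuperdiag, charpoly_firstColSuperdiag, Finset.sum_range_succ',
    ← Fin.sum_univ_eq_sum_range (fun i =>
      C (q ^ (((m + 2 : ℕ) - 3 : ℤ) * ((i + 1 : ℕ) : ℤ))) * X ^ (m + 2 - 1 - (i + 1)))]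
  simp only [neg_mul, hpow, map_neg, Finset.sum_neg_distrib, sub_neg_eq_add]
  rw [add_comm]
  congr 1
  · exact Finset.sum_congr rfl fun i _ => by congr 2; omega
  · simp

theorem stmt10 (n : ℕ) (hn : 2 ≤ n) :
    (Polynomial.X - Polynomial.C (q ^ ((n : ℤ) - 3))) * (Amat n).charpoly
        = Polynomial.X ^ n - Polynomial.C (q ^ ((n : ℤ) * ((n : ℤ) - 3))) ∧
    (Amat n).charpoly
        = ∑ i ∈ Finset.range n,
            Polynomial.C (q ^ (((n : ℤ) - 3) * (i : ℤ))) * Polynomial.X ^ (n - 1 - i) ∧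
    Function.Injective (fun ζ : ℂ => algebraMap ℂ K ζ * q ^ ((n : ℤ) - 3)) ∧
    ∀ ζ : ℂ, ζ ^ n = 1 → ζ ≠ 1 →
      ((Amat n).charpoly).IsRoot (algebraMap ℂ K ζ * q ^ ((n : ℤ) - 3)) := by
  set a := q ^ ((n : ℤ) - 3)
  have ha : a ≠ 0 := zpow_ne_zero _ q_ne_zero
  have hpow : ∀ i : ℕ, q ^ (((n : ℤ) - 3) * i) = a ^ i := fun i => by rw [zpow_mul, zpow_natCast]
  have hchar := charpoly_Amat hn
  have hfactor : (X - C a) * (Amat n).charpoly = X ^ n - C (a ^ n) := by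
    simpa only [hchar, hpow] using X_sub_C_mul_sum_C_pow_mul_X_pow a n
  refine ⟨by rwa [mul_comm (n : ℤ), hpow], hchar,
    (mul_left_injective₀ ha).comp (algebraMap ℂ K).injective,
    fun ζ hζ hζ1 => isRoot_of_X_sub_C_mul_eq hfactor ?_ ?_⟩
  · rw [mul_pow, ← map_pow, hζ, map_one, one_mul]
  · refine fun h => hζ1 ((algebraMap ℂ K).injective ?_)
    rw [map_one]
    exact mul_right_cancel₀ ha (h.trans (one_mul a).symm)

end
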